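/- Let M be a topological manifold covered by finitely many open sets U_1, …, U_k, and suppose each U_i admits a topological embedding g_i : U_i → ℝ^(q_i) whose image is bounded, such that g_i extends to a continuous map g̃_i : M → ℝ^(q_i) that is constant (equal to a point N_i ∉ g_i(U_i)) on M \ U_i. Then the map g = (g̃_1, …, g̃_k) : M → ℝ^(q_1 + ⋯ + q_k) is a topological embedding. -/

import Mathlib

/-!
A point `x` lies in some `U i`, and the open set `{y | y ≠ Nt i}` is a neighbourhood of `gt i x`
whose preimage under `gt i` lies in `U i`. Hence the single coordinate `gt i`, an embedding on
`U i`, already recovers the neighbourhoods of `x` and separates `x` from every other point.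
-/

open Filter Topology

section

variable {X Y : Type*} [TopologicalSpace X] [TopologicalSpace Y]

lemma comap_nhds_le_of_isInducing_domRestrict {f : X → Y} {U : Set X}
    (hf : IsInducing (U.domRestrict f)) {x : X} {V : Set Y} (hV : V ∈ 𝓝 (f x))
    (hVU : f ⁻¹' V ⊆ U) : comap f (𝓝 (f x)) ≤ 𝓝 x := by
  have hx : x ∈ U := hVU (show f x ∈ V from mem_of_mem_nhds hV)
  calc comap f (𝓝 (f x)) = comap f (𝓝 (f x)) ⊓ 𝓟 U :=
        (inf_eq_left.mpr (le_principal_iff.mpr (mem_of_superset (preimage_mem_comap hV) hVU))).symm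
    _ = map (↑) (𝓝 (⟨x, hx⟩ : U)) := by
        rw [hf.nhds_eq_comap, ← Filter.subtype_coe_map_comap, Filter.comap_comap]; rfl
    _ ≤ 𝓝 x := continuous_subtype_val.continuousAt

end

section

variable {ι X : Type*} {Y : ι → Type*} [TopologicalSpace X] [∀ i, TopologicalSpace (Y i)]

lemma isInducing_pi_of_exists_comap_nhds_le {f : ∀ i, X → Y i} (hf : ∀ i, Continuous (f i))
    (h : ∀ x, ∃ i, comap (f i) (𝓝 (f i x)) ≤ 𝓝 x) : IsInducing fun x i ↦ f i x := by
  refine isInducing_iff_nhds.mpr fun x ↦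
    le_antisymm ((continuous_pi hf).tendsto x).le_comap ?_
  obtain ⟨i, hi⟩ := h x
  calc comap (fun x i ↦ f i x) (𝓝 fun i ↦ f i x)
      ≤ comap (fun x i ↦ f i x) (comap (Function.eval i) (𝓝 (f i x))) :=
        comap_mono ((continuous_apply i).tendsto _).le_comap
    _ = comap (f i) (𝓝 (f i x)) := comap_comap
    _ ≤ 𝓝 x := hi

theorem isEmbedding_pi_of_isEmbedding_domRestrict {f : ∀ i, X → Y i}
    (hf : ∀ i, Continuous (f i)) {U : ι → Set X} {V : ∀ i, Set (Y i)}
    (hV : ∀ i, IsOpen (V i)) (hVU : ∀ i, f i ⁻¹' V i ⊆ U i)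
    (hcover : ∀ x, ∃ i, f i x ∈ V i) (hemb : ∀ i, IsEmbedding ((U i).domRestrict (f i))) :
    IsEmbedding fun x i ↦ f i x := by
  refine ⟨isInducing_pi_of_exists_comap_nhds_le hf fun x ↦ ?_, fun x y hxy ↦ ?_⟩
  · obtain ⟨i, hi⟩ := hcover x
    exact ⟨i, comap_nhds_le_of_isInducing_domRestrict (hemb i).isInducing
      ((hV i).mem_nhds hi) (hVU i)⟩
  · obtain ⟨i, hi⟩ := hcover x
    have hfi : f i x = f i y := congrFun hxy i
    have hy : f i y ∈ V i := hfi ▸ hi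
    exact congrArg Subtype.val ((hemb i).injective
      (a₁ := ⟨x, hVU i hi⟩) (a₂ := ⟨y, hVU i hy⟩) hfi)

end

theorem gluing_embedding_general (k : ℕ) (q : Fin k → ℕ)
    (M : Type*) [TopologicalSpace M]
    (U : Fin k → Set M) (hUcover : ⋃ i, U i = Set.univ)
    (gt : ∀ i : Fin k, M → EuclideanSpace ℝ (Fin (q i)))
    (Nt : ∀ i : Fin k, EuclideanSpace ℝ (Fin (q i)))
    (hcont : ∀ i, Continuous (gt i))
    (hemb : ∀ i, Topology.IsEmbedding (fun x : U i => gt i (x : M)))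
    (hconst : ∀ i, ∀ x ∉ U i, gt i x = Nt i)
    (hNnotin : ∀ i, Nt i ∉ gt i '' U i) :
    Topology.IsEmbedding (fun (x : M) (i : Fin k) => gt i x) := by
  refine isEmbedding_pi_of_isEmbedding_domRestrict hcont (V := fun i ↦ {Nt i}ᶜ)
    (fun _ ↦ isOpen_compl_singleton) (fun i x hx ↦ ?_) (fun x ↦ ?_) hemb
  · by_contra hxU
    exact hx (hconst i x hxU)
  · obtain ⟨i, hi⟩ := Set.mem_iUnion.mp (hUcover ▸ Set.mem_univ x)
    exact ⟨i, fun hN ↦ hNnotin i ⟨x, hi, hN⟩⟩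

/-- Gluing step of the Whitney-type embedding: let `M` be a topological manifold covered by
finitely many open sets `U i`, each admitting a topological embedding `g i : U i → ℝ^(q i)`
with bounded image, extending to a continuous map `g̃ i : M → ℝ^(q i)` which is constant,
with value a point `N i ∉ g i '' (U i)`, on `M \ U i`, and with
`closure (g i '' U i) \ g i '' U i ⊆ {N i}`. Then `x ↦ (g̃ 1 x, …, g̃ k x)` is a
topological embedding of `M` into `ℝ^(q 1 + ⋯ + q k)`. -/
theorem gluing_embedding (d k : ℕ) (q : Fin k → ℕ)
    (M : Type*) [TopologicalSpace M] [T2Space M]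
    [ChartedSpace (EuclideanSpace ℝ (Fin d)) M]
    (U : Fin k → Set M) (hUopen : ∀ i, IsOpen (U i)) (hUcover : ⋃ i, U i = Set.univ)
    (gt : ∀ i : Fin k, M → EuclideanSpace ℝ (Fin (q i)))
    (Nt : ∀ i : Fin k, EuclideanSpace ℝ (Fin (q i)))
    (hcont : ∀ i, Continuous (gt i))
    (hemb : ∀ i, Topology.IsEmbedding (fun x : U i => gt i (x : M)))
    (hbdd : ∀ i, Bornology.IsBounded (gt i '' U i))
    (hconst : ∀ i, ∀ x ∉ U i, gt i x = Nt i)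
    (hNnotin : ∀ i, Nt i ∉ gt i '' U i)
    (hfrontier : ∀ i, closure (gt i '' U i) \ gt i '' U i ⊆ {Nt i}) :
    Topology.IsEmbedding (fun (x : M) (i : Fin k) => gt i x) :=
  gluing_embedding_general k q M U hUcover gt Nt hcont hemb hconst hNnotin
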